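/- For every ε > 0 there exists N > 0 such that for all x > γ/β and y > 0 with x + y ≥ N, the SIR solution S, I with initial data (x, y) satisfies |β (x − γ/β + y) v(x, y) / ln[(x/(γ/β)) ((x − γ/β)/y + 1)] − 1| ≤ ε. That is, β (x − γ/β + y) v(x, y) / ln[(x/(γ/β)) ((x − γ/β)/y + 1)] → 1 as x + y → ∞ with x > γ/β and y > 0. -/

import Mathlib

open Set Filter

/-- An SIR solution with parameters β, γ and initial data (x, y):
differentiable functions S, I on [0,∞) with S' = -βSI, I' = βSI - γI,
S(0) = x, I(0) = y. -/
def IsSIRSolution (β γ x y : ℝ) (S I : ℝ → ℝ) : Prop :=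
  S 0 = x ∧ I 0 = y ∧
  ∀ t, 0 ≤ t →
    HasDerivWithinAt S (-(β * S t * I t)) (Set.Ici 0) t ∧
    HasDerivWithinAt I (β * S t * I t - γ * I t) (Set.Ici 0) t

open Real Topology

/-!
Write `ρ = γ / β`. Before the time `v` we have `ρ ≤ S ≤ x`, and `S + I - ρ log S` is a first
integral, so `S + I` stays within `M = ρ log (x / ρ) = O(√(x + y))` of `x + y`. The derivative of
`log (I / S)` is `β (S + I) - γ`, hence lies between `β (x - ρ + y - M)` and `β (x - ρ + y)` on
`[0, v]`. The total increase of `log (I / S)` over `[0, v]` is `log (I v / ρ) - log (y / x)` with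
`I v = x - ρ + y - M`; it differs from `L = log ((x / ρ) ((x - ρ) / y + 1))` by
`log ((x - ρ + y) / I v) ≤ M / I v ≤ ρ L / I v = o(L)`. As `M = o(x - ρ + y)`, both rates are
`(1 + o(1)) β (x - ρ + y)`, so `β (x - ρ + y) v / L → 1`.
-/

section OneSided

variable {f f' : ℝ → ℝ} {a b : ℝ}

lemma continuousOn_Icc_of_hasDerivWithinAt_Ici
    (hf : ∀ x ∈ Icc a b, HasDerivWithinAt f (f' x) (Ici a) x) : ContinuousOn f (Icc a b) :=
  fun x hx => ((hf x hx).continuousWithinAt).mono Icc_subset_Ici_self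

lemma hasDerivWithinAt_Ici_of_mem_Ico
    (hf : ∀ x ∈ Icc a b, HasDerivWithinAt f (f' x) (Ici a) x) {x : ℝ} (hx : x ∈ Ico a b) :
    HasDerivWithinAt f (f' x) (Ici x) x :=
  (hf x (Ico_subset_Icc_self hx)).mono (Ici_subset_Ici.2 hx.1)

lemma sub_le_mul_sub_of_hasDerivWithinAt_le {C : ℝ} (hab : a ≤ b)
    (hf : ∀ x ∈ Icc a b, HasDerivWithinAt f (f' x) (Ici a) x) (bound : ∀ x ∈ Ico a b, f' x ≤ C) :
    f b - f a ≤ C * (b - a) := by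
  have := image_le_of_deriv_right_le_deriv_boundary (continuousOn_Icc_of_hasDerivWithinAt_Ici hf)
    (fun _ => hasDerivWithinAt_Ici_of_mem_Ico hf) (B := fun x => f a + C * (x - a))
    (B' := fun _ => C) (by simp) (by fun_prop)
    (fun x _ => by simpa using ((hasDerivAt_id x).sub_const a).const_mul C |>.const_add (f a)
      |>.hasDerivWithinAt) bound (right_mem_Icc.2 hab)
  linarith

lemma mul_sub_le_sub_of_le_hasDerivWithinAt {C : ℝ} (hab : a ≤ b)
    (hf : ∀ x ∈ Icc a b, HasDerivWithinAt f (f' x) (Ici a) x) (bound : ∀ x ∈ Ico a b, C ≤ f' x) :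
    C * (b - a) ≤ f b - f a := by
  have := sub_le_mul_sub_of_hasDerivWithinAt_le (f := -f) (C := -C) hab
    (fun x hx => (hf x hx).neg) (fun x hx => neg_le_neg (bound x hx))
  simp only [Pi.neg_apply] at this
  linarith

lemma eq_of_hasDerivWithinAt_eq_zero (hab : a ≤ b)
    (hf : ∀ x ∈ Icc a b, HasDerivWithinAt f 0 (Ici a) x) : f b = f a :=
  constant_of_has_deriv_right_zero (continuousOn_Icc_of_hasDerivWithinAt_Ici hf)
    (fun _ => hasDerivWithinAt_Ici_of_mem_Ico hf) b (right_mem_Icc.2 hab)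

/-- Comparison with the barrier `f a * exp ((m - 1) * (x - a))`, where `m ≤ g` on `[a, b]`. -/
lemma pos_of_hasDerivWithinAt_mul_self {g : ℝ → ℝ} (hab : a ≤ b) (hg : ContinuousOn g (Icc a b))
    (hf : ∀ x ∈ Icc a b, HasDerivWithinAt f (g x * f x) (Ici a) x) (ha : 0 < f a) : 0 < f b := by
  obtain ⟨m, hm⟩ := isCompact_Icc.bddBelow_image hg
  set B : ℝ → ℝ := fun x => f a * exp ((m - 1) * (x - a))
  have hB : ∀ x, HasDerivAt B ((m - 1) * B x) x := fun x => by
    simpa [B, mul_comm, mul_left_comm, mul_assoc] using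
      ((((hasDerivAt_id x).sub_const a).const_mul (m - 1)).exp).const_mul (f a)
  have hle := image_le_of_deriv_right_lt_deriv_boundary' (f := -f) (B := -B)
    (continuousOn_Icc_of_hasDerivWithinAt_Ici hf).neg
    (fun x hx => (hasDerivWithinAt_Ici_of_mem_Ico hf hx).neg) (by simp [B])
    (by fun_prop) (fun x _ => (hB x).neg.hasDerivWithinAt) (fun x hx hfx => by
      have hfB : f x = B x := neg_inj.1 hfx
      have hBpos : 0 < B x := by positivity
      have : m ≤ g x := hm ⟨x, Ico_subset_Icc_self hx, rfl⟩
      simp only [neg_lt_neg_iff, hfB]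
      nlinarith) (right_mem_Icc.2 hab)
  simp only [Pi.neg_apply, neg_le_neg_iff] at hle
  exact lt_of_lt_of_le (by positivity) hle

end OneSided

lemma ContinuousOn.eq_of_isLeast_setOf_le {f : ℝ → ℝ} {c v : ℝ} (hf : ContinuousOn f (Ici 0))
    (h0 : c < f 0) (hv : IsLeast {t | 0 ≤ t ∧ f t ≤ c} v) : f v = c := by
  have hv0 : 0 < v := lt_of_le_of_ne hv.1.1 fun h => (h ▸ h0).not_ge hv.1.2
  have hlt : ∀ t ∈ Ioo 0 v, c ≤ f t := fun t ht =>
    le_of_not_ge fun h => (hv.2 ⟨ht.1.le, h⟩).not_gt ht.2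
  have := right_nhdsWithin_Ioo_neBot hv0
  have hfv : Tendsto f (𝓝[Ioo 0 v] v) (𝓝 (f v)) :=
    (hf v hv.1.1).mono_left (nhdsWithin_mono v (Ioo_subset_Ioi_self.trans Ioi_subset_Ici_self))
  exact le_antisymm hv.1.2 (ge_of_tendsto hfv (eventually_nhdsWithin_of_forall hlt))

namespace IsSIRSolution

variable {β γ x y v : ℝ} {S I : ℝ → ℝ}

lemma hasDerivWithinAt_S (h : IsSIRSolution β γ x y S I) {t : ℝ} (ht : t ∈ Ici 0) :
    HasDerivWithinAt S (-(β * S t * I t)) (Ici 0) t :=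
  (h.2.2 t ht).1

lemma hasDerivWithinAt_I (h : IsSIRSolution β γ x y S I) {t : ℝ} (ht : t ∈ Ici 0) :
    HasDerivWithinAt I (β * S t * I t - γ * I t) (Ici 0) t :=
  (h.2.2 t ht).2

lemma continuousOn_S (h : IsSIRSolution β γ x y S I) : ContinuousOn S (Ici 0) :=
  fun _ ht => (h.hasDerivWithinAt_S ht).continuousWithinAt

lemma continuousOn_I (h : IsSIRSolution β γ x y S I) : ContinuousOn I (Ici 0) :=
  fun _ ht => (h.hasDerivWithinAt_I ht).continuousWithinAt

lemma S_pos (h : IsSIRSolution β γ x y S I) (hx : 0 < x) {t : ℝ} (ht : 0 ≤ t) : 0 < S t := by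
  refine pos_of_hasDerivWithinAt_mul_self (g := fun u => -(β * I u)) ht
    ((h.continuousOn_I.mono Icc_subset_Ici_self).const_smul β).neg
    (fun u hu => (h.hasDerivWithinAt_S hu.1).congr_deriv (by ring)) (h.1 ▸ hx)

lemma I_pos (h : IsSIRSolution β γ x y S I) (hy : 0 < y) {t : ℝ} (ht : 0 ≤ t) : 0 < I t := by
  refine pos_of_hasDerivWithinAt_mul_self (g := fun u => β * S u - γ) ht
    (((h.continuousOn_S.mono Icc_subset_Ici_self).const_smul β).sub continuousOn_const)
    (fun u hu => (h.hasDerivWithinAt_I hu.1).congr_deriv (by ring)) (h.2.1 ▸ hy)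

lemma S_le (h : IsSIRSolution β γ x y S I) (hβ : 0 ≤ β) (hx : 0 < x) (hy : 0 < y) {t : ℝ}
    (ht : 0 ≤ t) : S t ≤ x := by
  have := sub_le_mul_sub_of_hasDerivWithinAt_le (C := 0) ht (fun u hu => h.hasDerivWithinAt_S hu.1)
    (fun u hu => by
      have := mul_pos (h.S_pos hx hu.1) (h.I_pos hy hu.1)
      nlinarith)
  linarith [h.1]

lemma add_sub_mul_log_S_eq (h : IsSIRSolution β γ x y S I) (hβ : β ≠ 0) (hx : 0 < x) {t : ℝ}
    (ht : 0 ≤ t) : S t + I t - γ / β * log (S t) = x + y - γ / β * log x := by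
  have := eq_of_hasDerivWithinAt_eq_zero (f := fun u => S u + I u - γ / β * log (S u)) ht
    fun u hu => (((h.hasDerivWithinAt_S hu.1).add (h.hasDerivWithinAt_I hu.1)).sub
      (((h.hasDerivWithinAt_S hu.1).log (h.S_pos hx hu.1).ne').const_mul (γ / β))).congr_deriv
      (by field_simp [(h.S_pos hx hu.1).ne']; ring)
  simpa [h.1, h.2.1] using this

lemma hasDerivWithinAt_log_I_sub_log_S (h : IsSIRSolution β γ x y S I) (hx : 0 < x) (hy : 0 < y)
    {t : ℝ} (ht : t ∈ Ici 0) :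
    HasDerivWithinAt (fun u => log (I u) - log (S u)) (β * (S t + I t) - γ) (Ici 0) t :=
  (((h.hasDerivWithinAt_I ht).log (h.I_pos hy ht).ne').sub
    ((h.hasDerivWithinAt_S ht).log (h.S_pos hx ht).ne')).congr_deriv
    (by field_simp [(h.S_pos hx ht).ne', (h.I_pos hy ht).ne']; ring)

lemma S_eq_of_isLeast (h : IsSIRSolution β γ x y S I) (hx : γ / β < x)
    (hv : IsLeast {t | 0 ≤ t ∧ S t ≤ γ / β} v) : S v = γ / β :=
  h.continuousOn_S.eq_of_isLeast_setOf_le (h.1 ▸ hx) hv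

lemma I_eq_of_isLeast (h : IsSIRSolution β γ x y S I) (hβ : 0 < β) (hγ : 0 < γ) (hx : γ / β < x)
    (hv : IsLeast {t | 0 ≤ t ∧ S t ≤ γ / β} v) :
    I v = x - γ / β + y - γ / β * log (x / (γ / β)) := by
  have hρ : 0 < γ / β := div_pos hγ hβ
  have := h.add_sub_mul_log_S_eq hβ.ne' (hρ.trans hx) hv.1.1
  rw [h.S_eq_of_isLeast hx hv] at this
  rw [log_div (hρ.trans hx).ne' hρ.ne']
  linarith

lemma log_I_sub_log_S_bounds (h : IsSIRSolution β γ x y S I) (hβ : 0 < β) (hγ : 0 < γ)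
    (hx : γ / β < x) (hy : 0 < y) (hv : IsLeast {t | 0 ≤ t ∧ S t ≤ γ / β} v) :
    β * (x - γ / β + y - γ / β * log (x / (γ / β))) * v ≤
        log (I v) - log (S v) - (log y - log x) ∧
      log (I v) - log (S v) - (log y - log x) ≤ β * (x - γ / β + y) * v := by
  have hρ : 0 < γ / β := div_pos hγ hβ
  have hx0 : 0 < x := hρ.trans hx
  have hγ' : γ = β * (γ / β) := by field_simp
  have hG := fun t (ht : t ∈ Icc 0 v) => h.hasDerivWithinAt_log_I_sub_log_S hx0 hy ht.1
  have hS : ∀ t ∈ Ico 0 v, γ / β ≤ S t ∧ S t ≤ x := fun t ht =>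
    ⟨le_of_not_ge fun h' => (hv.2 ⟨ht.1, h'⟩).not_gt ht.2, h.S_le hβ.le hx0 hy ht.1⟩
  have hSI : ∀ t ∈ Ico 0 v, β * (S t + I t) - γ =
      β * (x - γ / β + y - γ / β * (log x - log (S t))) := fun t ht => by
    linear_combination β * h.add_sub_mul_log_S_eq hβ.ne' hx0 ht.1 - hγ'
  have hlow := mul_sub_le_sub_of_le_hasDerivWithinAt
    (C := β * (x - γ / β + y - γ / β * log (x / (γ / β)))) hv.1.1 hG fun t ht => by
    rw [hSI t ht, log_div hx0.ne' hρ.ne']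
    have := log_le_log hρ (hS t ht).1
    gcongr
  have hup := sub_le_mul_sub_of_hasDerivWithinAt_le
    (C := β * (x - γ / β + y)) hv.1.1 hG fun t ht => by
    rw [hSI t ht]
    have := log_le_log (hρ.trans_le (hS t ht).1) (hS t ht).2
    have : 0 ≤ γ / β * (log x - log (S t)) := mul_nonneg hρ.le (by linarith)
    nlinarith
  simp only [h.1, h.2.1, sub_zero] at hlow hup
  exact ⟨hlow, hup⟩

end IsSIRSolution

lemma abs_div_sub_one_le_of_bounds {a b L δ ε : ℝ} (hL : 0 < L) (hε : 0 ≤ ε) (hδ₀ : 0 ≤ δ)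
    (hδ : δ ≤ ε * L) (hba : b ≤ (1 + ε) * a) (ha : a ≤ L - δ) (hb : L - δ ≤ b) :
    |b / L - 1| ≤ ε := by
  rw [abs_le, le_sub_iff_add_le, sub_le_iff_le_add, le_div_iff₀ hL, div_le_iff₀ hL]
  constructor <;> nlinarith

lemma eventually_mul_sqrt_add_le (a b : ℝ) : ∀ᶠ n in atTop, a * √n + b ≤ n := by
  filter_upwards [eventually_ge_atTop ((|a| + |b| + 1) ^ 2)] with n hn
  have hs : |a| + |b| + 1 ≤ √n := le_sqrt_of_sq_le hn
  have hsq : √n * √n = n := mul_self_sqrt ((sq_nonneg _).trans hn)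
  nlinarith [le_abs_self a, le_abs_self b, abs_nonneg a, abs_nonneg b, sqrt_nonneg n]

lemma mul_log_div_le_two_sqrt_mul {ρ n : ℝ} (hρ : 0 < ρ) (hn : 0 ≤ n) :
    ρ * log (n / ρ) ≤ 2 * √ρ * √n := by
  have := log_le_rpow_div (div_nonneg hn hρ.le) one_half_pos
  rw [← sqrt_eq_rpow, sqrt_div hn] at this
  calc ρ * log (n / ρ) ≤ ρ * (√n / √ρ / (1 / 2)) := by gcongr
    _ = 2 * √ρ * √n := by
      field_simp
      rw [sq_sqrt hρ.le, mul_comm]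

lemma exists_threshold_mul_log_div_le {ρ ε : ℝ} (hρ : 0 < ρ) (hε : 0 < ε) :
    ∃ N, ∀ x y, ρ < x → 0 < y → N ≤ x + y →
      (1 + ε) * (ρ * log (x / ρ)) ≤ ε * (x - ρ + y) ∧
        ρ ≤ ε * (x - ρ + y - ρ * log (x / ρ)) := by
  obtain ⟨N, hN⟩ := eventually_atTop.1 <|
    (eventually_mul_sqrt_add_le ((1 + ε) * (2 * √ρ) / ε) ρ).and
      (eventually_mul_sqrt_add_le (2 * √ρ) (ρ + ρ / ε))
  refine ⟨N, fun x y hx hy hN' => ?_⟩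
  have hx0 : 0 < x := hρ.trans hx
  obtain ⟨h₁, h₂⟩ := hN (x + y) hN'
  have hM : ρ * log (x / ρ) ≤ 2 * √ρ * √(x + y) :=
    (mul_le_mul_of_nonneg_left (log_le_log (div_pos hx0 hρ) (by gcongr; linarith)) hρ.le).trans
      (mul_log_div_le_two_sqrt_mul hρ (by linarith))
  have h₁' : (1 + ε) * (2 * √ρ) * √(x + y) + ε * ρ ≤ ε * (x + y) := by
    have := mul_le_mul_of_nonneg_left h₁ hε.le
    rwa [mul_add, ← mul_assoc, mul_div_cancel₀ _ hε.ne'] at this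
  have h₂' : ρ ≤ ε * (x + y - ρ - 2 * √ρ * √(x + y)) := by
    have := mul_le_mul_of_nonneg_left h₂ hε.le
    rw [mul_add, mul_add, mul_div_cancel₀ _ hε.ne'] at this
    nlinarith
  constructor <;> nlinarith

lemma abs_div_log_sub_one_le {β ρ ε x y v : ℝ} (hβ : 0 < β) (hρ : 0 < ρ) (hε : 0 < ε)
    (hx : ρ < x) (hy : 0 < y) (hv : 0 ≤ v)
    (hM : (1 + ε) * (ρ * log (x / ρ)) ≤ ε * (x - ρ + y))
    (hW : ρ ≤ ε * (x - ρ + y - ρ * log (x / ρ)))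
    (hlow : β * (x - ρ + y - ρ * log (x / ρ)) * v ≤
      log (x - ρ + y - ρ * log (x / ρ)) - log ρ - (log y - log x))
    (hup : log (x - ρ + y - ρ * log (x / ρ)) - log ρ - (log y - log x) ≤ β * (x - ρ + y) * v) :
    |β * (x - ρ + y) * v / log ((x / ρ) * ((x - ρ) / y + 1)) - 1| ≤ ε := by
  have hx0 : 0 < x := hρ.trans hx
  have hlogx : 0 < log (x / ρ) := log_pos ((one_lt_div hρ).2 hx)
  rw [div_add_one hy.ne']
  set P := x - ρ + y
  set M := ρ * log (x / ρ)
  have hP : y ≤ P := by linarith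
  have hW0 : 0 < P - M := pos_of_mul_pos_right (hρ.trans_le hW) hε.le
  have hM0 : 0 < M := mul_pos hρ hlogx
  have hL : log (x / ρ * (P / y)) = log (x / ρ) + log (P / y) :=
    log_mul (div_pos hx0 hρ).ne' (div_pos (hy.trans_le hP) hy).ne'
  have hlogP : 0 ≤ log (P / y) := log_nonneg ((one_le_div hy).2 hP)
  set δ := log (P / (P - M)) with hδ_def
  have hsplit : log (x / ρ * (P / y)) - δ = log (P - M) - log ρ - (log y - log x) := by
    rw [hL, hδ_def, log_div hx0.ne' hρ.ne', log_div (by linarith) hy.ne',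
      log_div (by linarith) hW0.ne']
    ring
  have hδ₀ : 0 ≤ δ := log_nonneg ((one_le_div hW0).2 (by linarith))
  have hδ : δ ≤ ε * log (x / ρ * (P / y)) := calc
    δ ≤ P / (P - M) - 1 := log_le_sub_one_of_pos (div_pos (by linarith) hW0)
    _ = M / (P - M) := by field_simp; ring
    _ ≤ ε * log (x / ρ * (P / y)) := by
      rw [div_le_iff₀ hW0, hL]
      nlinarith [mul_le_mul_of_nonneg_right hW (add_pos_of_pos_of_nonneg hlogx hlogP).le]
  refine abs_div_sub_one_le_of_bounds (by rw [hL]; positivity) hε.le hδ₀ hδ ?_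
    (hsplit ▸ hlow) (hsplit ▸ hup)
  nlinarith [mul_nonneg (mul_nonneg hβ.le hv) (sub_nonneg.2 hM)]

theorem stmt_19 (β γ : ℝ) (hβ : 0 < β) (hγ : 0 < γ)
    (ε : ℝ) (hε : 0 < ε) :
    ∃ N : ℝ, 0 < N ∧
      ∀ x y : ℝ, γ / β < x → 0 < y → N ≤ x + y →
        ∀ S I : ℝ → ℝ, IsSIRSolution β γ x y S I →
          ∀ v : ℝ, IsLeast {t : ℝ | 0 ≤ t ∧ S t ≤ γ / β} v →
            |β * (x - γ / β + y) * v /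
                Real.log ((x / (γ / β)) * ((x - γ / β) / y + 1)) - 1| ≤ ε := by
  have hρ : 0 < γ / β := div_pos hγ hβ
  obtain ⟨N, hN⟩ := exists_threshold_mul_log_div_le hρ hε
  refine ⟨max N 1, by positivity, fun x y hx hy hxy S I hSIR v hv => ?_⟩
  obtain ⟨hM, hW⟩ := hN x y hx hy ((le_max_left _ _).trans hxy)
  obtain ⟨hlow, hup⟩ := hSIR.log_I_sub_log_S_bounds hβ hγ hx hy hv
  rw [hSIR.S_eq_of_isLeast hx hv, hSIR.I_eq_of_isLeast hβ hγ hx hv] at hlow hup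
  exact abs_div_log_sub_one_le hβ hρ hε hx hy hv.1.1 hM hW hlow hup
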